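/- If f : ℝ^d → ℝ is convex and differentiable with L-Lipschitz gradient, then ∇f is (1/L)-cocoercive: ‖∇f(u) − ∇f(v)‖² ≤ L⟨∇f(u) − ∇f(v), u − v⟩ for all u, v. -/

import Mathlib

open InnerProductSpace intervalIntegral

variable {d : ℕ}

local notation "E" => EuclideanSpace ℝ (Fin d)
local notation "⟪" x ", " y "⟫" => @inner ℝ _ _ x y

lemma aux_line (f : E → ℝ) (g : E → E) (hgrad : ∀ x, HasGradientAt f (g x) x)
    (x y : E) (t : ℝ) :
    HasDerivAt (fun s : ℝ => f (x + s • (y - x))) ⟪g (x + t • (y - x)), y - x⟫ t := by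
  have hline : HasDerivAt (fun s : ℝ => x + s • (y - x)) (y - x) t := by
    simpa using ((hasDerivAt_id t).smul_const (y - x)).const_add x
  have h := ((hgrad (x + t • (y - x))).hasFDerivAt.comp_hasDerivAt t hline)
  simp [InnerProductSpace.toDual_apply_apply] at h
  exact h

lemma aux_lower (f : E → ℝ) (g : E → E) (hconv : ConvexOn ℝ Set.univ f)
    (hgrad : ∀ x, HasGradientAt f (g x) x) (u v : E) :
    f u + ⟪g u, v - u⟫ ≤ f v := by
  set φ : ℝ → ℝ := fun s => f (u + s • (v - u)) with hφ
  have hφconv : ConvexOn ℝ Set.univ φ := by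
    have := hconv.comp_affineMap (AffineMap.lineMap u v : ℝ →ᵃ[ℝ] E)
    simp only [Set.preimage_univ] at this
    have heq : φ = f ∘ (AffineMap.lineMap u v : ℝ →ᵃ[ℝ] E) := by
      funext s
      simp only [φ, Function.comp_apply, AffineMap.lineMap_apply, vsub_eq_sub, vadd_eq_add]
      congr 1
      abel
    rw [heq]
    exact this
  have hd : HasDerivAt φ ⟪g u, v - u⟫ 0 := by
    have := aux_line f g hgrad u v 0
    simpa using this
  have := hφconv.le_slope_of_hasDerivAt (Set.mem_univ (0:ℝ)) (Set.mem_univ (1:ℝ))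
    one_pos hd
  rw [slope_def_field] at this
  simp only [φ] at this
  simp only [one_smul, zero_smul, add_zero] at this
  have hv : u + (v - u) = v := by abel
  rw [hv] at this
  -- this : ⟪g u, v - u⟫ ≤ (f v - f u) / (1 - 0)
  linarith [this, (by norm_num : ((f v - f u) / ((1:ℝ) - 0)) = f v - f u) ▸ this]

lemma aux_descent (f : E → ℝ) (g : E → E) (L : ℝ) (hL : 0 < L)
    (hgrad : ∀ x, HasGradientAt f (g x) x)
    (hlip : ∀ u v, ‖g u - g v‖ ≤ L * ‖u - v‖) (x y : E) :
    f y ≤ f x + ⟪g x, y - x⟫ + L / 2 * ‖y - x‖ ^ 2 := by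
  have hgc : Continuous g := by
    have : LipschitzWith L.toNNReal g := by
      apply LipschitzWith.of_dist_le_mul
      intro u v
      rw [dist_eq_norm, dist_eq_norm, Real.coe_toNNReal L hL.le]
      exact hlip u v
    exact this.continuous
  set F : ℝ → ℝ := fun t => ⟪g (x + t • (y - x)), y - x⟫ with hF
  have hFcont : Continuous F := by
    apply Continuous.inner
    · exact hgc.comp (by continuity)
    · exact continuous_const
  have hftc : ∫ t in (0:ℝ)..1, F t = f y - f x := by
    have := intervalIntegral.integral_eq_sub_of_hasDerivAt
      (f := fun s : ℝ => f (x + s • (y - x))) (f' := F)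
      (fun t _ => aux_line f g hgrad x y t) (hFcont.intervalIntegrable 0 1)
    simpa [hF] using this
  have hbound : ∀ t ∈ Set.Icc (0:ℝ) 1, F t ≤ F 0 + L * ‖y - x‖ ^ 2 * t := by
    intro t ht
    have h1 : F t - F 0 = ⟪g (x + t • (y - x)) - g x, y - x⟫ := by
      simp [hF, inner_sub_left]
    have h2 : ⟪g (x + t • (y - x)) - g x, y - x⟫ ≤
        ‖g (x + t • (y - x)) - g x‖ * ‖y - x‖ := real_inner_le_norm _ _
    have h3 : ‖g (x + t • (y - x)) - g x‖ ≤ L * (t * ‖y - x‖) := by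
      have := hlip (x + t • (y - x)) x
      have he : x + t • (y - x) - x = t • (y - x) := by abel
      rw [he, norm_smul, Real.norm_eq_abs, abs_of_nonneg ht.1] at this
      exact this
    nlinarith [norm_nonneg (y - x), ht.1, h2, h3, h1]
  have hint : ∫ t in (0:ℝ)..1, F t ≤ ∫ t in (0:ℝ)..1, (F 0 + L * ‖y - x‖ ^ 2 * t) := by
    apply intervalIntegral.integral_mono_on zero_le_one
      (hFcont.intervalIntegrable 0 1)
      ((by fun_prop : Continuous fun t : ℝ => F 0 + L * ‖y - x‖ ^ 2 * t).intervalIntegrable 0 1)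
      hbound
  have hrhs : ∫ t in (0:ℝ)..1, (F 0 + L * ‖y - x‖ ^ 2 * t) = F 0 + L / 2 * ‖y - x‖ ^ 2 := by
    rw [intervalIntegral.integral_add (intervalIntegrable_const)
      ((by fun_prop : Continuous fun t : ℝ => L * ‖y - x‖ ^ 2 * t).intervalIntegrable 0 1),
      intervalIntegral.integral_const_mul, integral_id]
    norm_num
    ring
  have hF0 : F 0 = ⟪g x, y - x⟫ := by simp [hF]
  rw [hftc] at hint
  rw [hrhs, hF0] at hint
  linarith

lemma aux_key (f : E → ℝ) (g : E → E) (L : ℝ) (hL : 0 < L)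
    (hconv : ConvexOn ℝ Set.univ f)
    (hgrad : ∀ x, HasGradientAt f (g x) x)
    (hlip : ∀ u v, ‖g u - g v‖ ≤ L * ‖u - v‖) (u v : E) :
    f u + ⟪g u, v - u⟫ + 1 / (2 * L) * ‖g v - g u‖ ^ 2 ≤ f v := by
  set h : E → ℝ := fun x => f x - ⟪g u, x⟫ with hh
  set gh : E → E := fun x => g x - g u with hgh
  have hlinconc : ConcaveOn ℝ Set.univ (fun x : E => ⟪g u, x⟫) := by
    refine ⟨convex_univ, ?_⟩
    intro x _ y _ a b _ _ _
    exact le_of_eq (by simp only [smul_eq_mul, inner_add_right, real_inner_smul_right])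
  have hconvh : ConvexOn ℝ Set.univ h := hconv.sub hlinconc
  have hgradh : ∀ x, HasGradientAt h (gh x) x := by
    intro x
    have h1 : HasFDerivAt (fun z : E => ⟪g u, z⟫)
        (InnerProductSpace.toDual ℝ (EuclideanSpace ℝ (Fin d)) (g u)) x :=
      (InnerProductSpace.toDual ℝ (EuclideanSpace ℝ (Fin d)) (g u)).hasFDerivAt
    have h2 := (hgrad x).hasFDerivAt.sub h1
    rw [HasGradientAt, HasGradientAtFilter]
    rw [hgh]
    simp only [map_sub]
    exact h2
  have hliph : ∀ a b, ‖gh a - gh b‖ ≤ L * ‖a - b‖ := by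
    intro a b
    have : gh a - gh b = g a - g b := by simp only [hgh]; abel
    rw [this]; exact hlip a b
  have hmin : ∀ z, h u ≤ h z := by
    intro z
    have := aux_lower h gh hconvh hgradh u z
    simpa [hgh] using this
  set z : E := v - (1 / L) • (g v - g u) with hz
  have hdes := aux_descent h gh L hL hgradh hliph v z
  have hzv : z - v = -((1 / L) • (g v - g u)) := by rw [hz]; abel
  have hin : ⟪gh v, z - v⟫ = -(1 / L) * ‖g v - g u‖ ^ 2 := by
    rw [hzv, hgh]
    simp only [inner_neg_right, real_inner_smul_right]
    rw [real_inner_self_eq_norm_sq]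
    ring
  have hnrm : ‖z - v‖ ^ 2 = (1 / L) ^ 2 * ‖g v - g u‖ ^ 2 := by
    rw [hzv, norm_neg, norm_smul, Real.norm_eq_abs, abs_of_nonneg (by positivity : (0:ℝ) ≤ 1 / L)]
    ring
  have hkey : h u ≤ h v - 1 / (2 * L) * ‖g v - g u‖ ^ 2 := by
    have h1 := hmin z
    rw [hin, hnrm] at hdes
    have heq : h v + -(1 / L) * ‖g v - g u‖ ^ 2 + L / 2 * ((1 / L) ^ 2 * ‖g v - g u‖ ^ 2)
        = h v - 1 / (2 * L) * ‖g v - g u‖ ^ 2 := by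
      field_simp
      ring
    rw [heq] at hdes
    exact le_trans h1 hdes
  have hexp : ⟪g u, v⟫ - ⟪g u, u⟫ = ⟪g u, v - u⟫ := (inner_sub_right _ _ _).symm
  simp only [hh] at hkey
  linarith [hkey, hexp]

/-- If `f` is convex and differentiable with `L`-Lipschitz gradient `g = ∇f`,
then `∇f` is `(1/L)`-cocoercive. -/
theorem gradient_cocoercive {d : ℕ}
    (f : EuclideanSpace ℝ (Fin d) → ℝ) (g : EuclideanSpace ℝ (Fin d) → EuclideanSpace ℝ (Fin d))
    (L : ℝ) (hL : 0 < L)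
    (hconv : ConvexOn ℝ Set.univ f)
    (hgrad : ∀ x, HasGradientAt f (g x) x)
    (hlip : ∀ u v, ‖g u - g v‖ ≤ L * ‖u - v‖) :
    ∀ u v, ‖g u - g v‖ ^ 2 ≤ L * inner ℝ (g u - g v) (u - v) := by
  intro u v
  have h1 := aux_key f g L hL hconv hgrad hlip u v
  have h2 := aux_key f g L hL hconv hgrad hlip v u
  have hn : ‖g v - g u‖ = ‖g u - g v‖ := norm_sub_rev _ _
  rw [hn] at h1
  have he1 : ⟪g u, v - u⟫ + ⟪g v, u - v⟫ = -⟪g u - g v, u - v⟫ := by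
    rw [inner_sub_left]
    have : ⟪g u, v - u⟫ = -⟪g u, u - v⟫ := by
      rw [← inner_neg_right]; congr 1; abel
    rw [this]; ring
  have hc : 1 / (2 * L) * ‖g u - g v‖ ^ 2 + 1 / (2 * L) * ‖g u - g v‖ ^ 2
      = (1 / L) * ‖g u - g v‖ ^ 2 := by field_simp; ring
  have hsum : (1 / L) * ‖g u - g v‖ ^ 2 ≤ ⟪g u - g v, u - v⟫ := by linarith [h1, h2, he1, hc]
  have := mul_le_mul_of_nonneg_left hsum hL.le
  calc ‖g u - g v‖ ^ 2 = L * ((1 / L) * ‖g u - g v‖ ^ 2) := by field_simp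
    _ ≤ L * ⟪g u - g v, u - v⟫ := this
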